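/- Fix a universe u. Suppose Φ assigns to every ω-complete partial order α with least element ⊥ in Type u and to every ω-continuous map f : α →𝒄 α an element Φ α f ∈ α, subject to: (fixpoint) f (Φ α f) = Φ α f for all α and f; and (uniformity) for all such α, β, all f : α →𝒄 α, g : β →𝒄 β, and every ω-continuous map s : α →𝒄 β with s ⊥ = ⊥ and s ∘ f = g ∘ s, one has s (Φ α f) = Φ β g. Then Φ α f = ωSup ⟨n ↦ f^[n] ⊥⟩ for all α and f; in particular the uniform fixpoint operator on pointed ω-complete partial orders is unique and is given by the Kleene formula. -/

import Mathlib

/-! The Kleene supremum `σ` is the least prefixed point of `f`, so `σ ≤ Φ α f`. Conversely `f` restricts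
to the down-set `Iic σ`, and the inclusion `Iic σ → α` is strict, continuous and intertwines the
restriction with `f`; uniformity then exhibits `Φ α f` as the image of an element of `Iic σ`. -/

open OmegaCompletePartialOrder

universe u

/-- The Kleene chain `⊥ ≤ f ⊥ ≤ f (f ⊥) ≤ ⋯` of iterates of `f` starting at `⊥`. -/
def kleeneChain {α : Type u} [OmegaCompletePartialOrder α] [OrderBot α]
    (f : α →𝒄 α) : Chain α where
  toFun n := f^[n] ⊥
  monotone' := monotone_nat_of_le_succ fun n => by
    rw [Function.iterate_succ_apply]
    exact (f.toOrderHom.monotone.iterate n) bot_le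

instance Set.Iic.omegaCompletePartialOrder {α : Type*} [OmegaCompletePartialOrder α] (a : α) :
    OmegaCompletePartialOrder (Set.Iic a) :=
  OmegaCompletePartialOrder.subtype _ fun c hc => ωSup_le _ _ fun i => hc (c i) ⟨i, rfl⟩

namespace OmegaCompletePartialOrder.ContinuousHom

variable {α : Type*} [OmegaCompletePartialOrder α]

def iicVal (a : α) : Set.Iic a →𝒄 α where
  toFun := Subtype.val
  monotone' _ _ h := h
  map_ωSup' _ := rfl

def restrictIic (f : α →𝒄 α) {a : α} (ha : f a ≤ a) : Set.Iic a →𝒄 Set.Iic a where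
  toFun x := ⟨f x, (f.monotone x.2).trans ha⟩
  monotone' _ _ h := f.monotone h
  map_ωSup' c := Subtype.ext (f.continuous (c.map (OrderHom.Subtype.val _)))

end OmegaCompletePartialOrder.ContinuousHom

section Kleene

variable {α : Type u} [OmegaCompletePartialOrder α] [OrderBot α] (f : α →𝒄 α)

theorem kleeneChain_eq_iterateChain : kleeneChain f = fixedPoints.iterateChain f ⊥ bot_le := rfl

theorem map_ωSup_kleeneChain : f (ωSup (kleeneChain f)) = ωSup (kleeneChain f) := by
  rw [kleeneChain_eq_iterateChain]
  exact fixedPoints.ωSup_iterate_mem_fixedPoint f ⊥ bot_le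

theorem ωSup_kleeneChain_le_of_map_le {a : α} (ha : f a ≤ a) : ωSup (kleeneChain f) ≤ a := by
  rw [kleeneChain_eq_iterateChain]
  exact fixedPoints.ωSup_iterate_le_prefixedPoint f ⊥ bot_le ha bot_le

end Kleene

/-- Uniqueness of the uniform fixpoint operator on pointed ω-complete partial orders:
any operator `Φ` assigning to every continuous endomap a fixed point, uniformly with
respect to strict continuous maps, is given by the Kleene formula. -/
theorem uniform_fixpoint_unique
    (Φ : ∀ (α : Type u) [OmegaCompletePartialOrder α] [OrderBot α], (α →𝒄 α) → α)
    (hfix : ∀ (α : Type u) [OmegaCompletePartialOrder α] [OrderBot α]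
      (f : α →𝒄 α), f (Φ α f) = Φ α f)
    (hunif : ∀ (α β : Type u)
      [OmegaCompletePartialOrder α] [OrderBot α]
      [OmegaCompletePartialOrder β] [OrderBot β]
      (f : α →𝒄 α) (g : β →𝒄 β) (s : α →𝒄 β),
      s ⊥ = ⊥ → ⇑s ∘ ⇑f = ⇑g ∘ ⇑s → s (Φ α f) = Φ β g)
    (α : Type u) [OmegaCompletePartialOrder α] [OrderBot α] (f : α →𝒄 α) :
    Φ α f = ωSup (kleeneChain f) := by
  refine le_antisymm ?_ (ωSup_kleeneChain_le_of_map_le f (hfix α f).le)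
  have hσ := (map_ωSup_kleeneChain f).le
  rw [← hunif _ α (f.restrictIic hσ) f (ContinuousHom.iicVal _) rfl rfl]
  exact (Φ _ (f.restrictIic hσ)).2
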